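/- arXiv:math/0609726 — 2 statements merged into one kernel-verified Lean document; each statement's English description precedes it below -/
import Mathlib

section
/- Let σ, σ' ∈ W and let Θ, Θ' ⊆ I be special. Then σ'R(Θ') ⊆ σR(Θ) if and only if Θ' ⊇ Θ and σ⁻¹σ' ∈ W_{Θ⊥}W_{Θ'}. Consequently, two distinct faces of the Tits cone X of the same type are incomparable under inclusion. -/
open scoped Pointwise

/-- A realization over `ℝ` of a generalized Cartan matrix `A = (a_{ij})_{i,j ∈ I}`.
The space `E` plays the role of `h_ℝ*`; `coroot i` is the linear functional
`λ ↦ λ(h_i)` of evaluation against the simple coroot `h_i`, and `root i` is the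
simple root `α_i ∈ h_ℝ*`. -/
structure GCMRealization where
  I : Type
  E : Type
  [fintypeI : Fintype I]
  [decEqI : DecidableEq I]
  [addCommGroupE : AddCommGroup E]
  [moduleE : Module ℝ E]
  [finiteDimensionalE : FiniteDimensional ℝ E]
  A : I → I → ℤ
  diag : ∀ i, A i i = 2
  offDiag_nonpos : ∀ i j, i ≠ j → A i j ≤ 0
  zero_iff : ∀ i j, A i j = 0 ↔ A j i = 0
  root : I → E
  coroot : I → E →ₗ[ℝ] ℝ
  root_indep : LinearIndependent ℝ root
  coroot_indep : LinearIndependent ℝ coroot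
  pairing : ∀ i j, coroot i (root j) = (A i j : ℝ)

attribute [instance] GCMRealization.fintypeI GCMRealization.decEqI
  GCMRealization.addCommGroupE GCMRealization.moduleE GCMRealization.finiteDimensionalE

namespace GCMRealization

variable (S : GCMRealization)

/-- The group of linear automorphisms of `E`, realized as units of the
endomorphism monoid. -/
abbrev U := (S.E →ₗ[ℝ] S.E)ˣ

/-- Application of a linear automorphism to a vector. -/
def ap (σ : S.U) (x : S.E) : S.E := σ.val x

/-- The simple reflection `σ_i : λ ↦ λ - λ(h_i) α_i` as a linear endomorphism. -/
def sMap (i : S.I) : S.E →ₗ[ℝ] S.E := LinearMap.id - (S.coroot i).smulRight (S.root i)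

lemma sMap_apply (i : S.I) (x : S.E) : S.sMap i x = x - S.coroot i x • S.root i := rfl

lemma sMap_sq (i : S.I) : S.sMap i * S.sMap i = 1 := by
  have h2 : S.coroot i (S.root i) = 2 := by
    rw [S.pairing, S.diag]; norm_num
  ext x
  rw [Module.End.mul_apply, Module.End.one_apply, sMap_apply, sMap_apply, map_sub, map_smul, h2,
    smul_eq_mul]
  have h3 : S.coroot i x - S.coroot i x * 2 = -(S.coroot i x) := by ring
  rw [h3, neg_smul, sub_neg_eq_add]
  abel

/-- The simple reflection `σ_i` as a linear automorphism. -/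
def sUnit (i : S.I) : S.U := ⟨S.sMap i, S.sMap i, S.sMap_sq i, S.sMap_sq i⟩

/-- The Weyl group `W`, generated by the simple reflections. -/
def W : Subgroup S.U := Subgroup.closure (Set.range S.sUnit)

/-- The standard parabolic subgroup `W_J`, generated by `{σ_i : i ∈ J}`. -/
def WJ (J : Set S.I) : Subgroup S.U := Subgroup.closure (S.sUnit '' J)

lemma WJ_le_W (J : Set S.I) : S.WJ J ≤ S.W :=
  Subgroup.closure_mono (Set.image_subset_range _ _)

lemma ap_mul (σ τ : S.U) (x : S.E) : S.ap (σ * τ) x = S.ap σ (S.ap τ x) := rfl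

lemma ap_one (x : S.E) : S.ap 1 x = x := rfl

/-- The closed fundamental chamber `C̄`. -/
def chamber : Set S.E := { x | ∀ i, 0 ≤ S.coroot i x }

/-- The Tits cone `X = W ⬝ C̄`. -/
def titsCone : Set S.E := { x | ∃ σ ∈ S.W, ∃ y ∈ S.chamber, x = S.ap σ y }

/-- The open facet `F_J` of type `J`. -/
def openFacet (J : Set S.I) : Set S.E :=
  { x | (∀ i ∈ J, S.coroot i x = 0) ∧ ∀ i, i ∉ J → 0 < S.coroot i x }

/-- The closed facet `F̄_J` of type `J`. -/
def closedFacet (J : Set S.I) : Set S.E :=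
  { x | (∀ i ∈ J, S.coroot i x = 0) ∧ ∀ i, i ∉ J → 0 ≤ S.coroot i x }

/-- A face of the Tits cone, in the sense of convex geometry: an extreme convex
subcone of the convex cone `X`. -/
def IsFace (F : Set S.E) : Prop :=
  Convex ℝ F ∧ (∀ c : ℝ, 0 ≤ c → ∀ x ∈ F, c • x ∈ F) ∧ IsExtreme ℝ S.titsCone F

/-- The set `Fa(X)` of faces of the Tits cone. -/
def faces : Set (Set S.E) := { F | S.IsFace F }

lemma faces_subset {F : Set S.E} (h : F ∈ S.faces) : F ⊆ S.titsCone := h.2.2.1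

/-- Two indices of `Θ` are linked if they are joined by an edge of the Coxeter
diagram of the submatrix `A_Θ`. -/
def connRel (Θ : Set S.I) (i j : S.I) : Prop := i ∈ Θ ∧ j ∈ Θ ∧ S.A i j ≠ 0

/-- The index set of the connected component of `i` in the submatrix `A_Θ`. -/
def component (Θ : Set S.I) (i : S.I) : Set S.I :=
  { j | j ∈ Θ ∧ Relation.ReflTransGen (S.connRel Θ) i j }

/-- A subset `K ⊆ I` is of finite type iff its Weyl group `W_K` is finite. -/
def finType (K : Set S.I) : Prop := Finite (S.WJ K)

/-- `Θ^∞`: the union of the index sets of the connected components of `A_Θ` of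
non-finite type. -/
def infpart (Θ : Set S.I) : Set S.I := { i | i ∈ Θ ∧ ¬ S.finType (S.component Θ i) }

/-- `Θ⁰`: the union of the index sets of the connected components of `A_Θ` of
finite type. -/
def finpart (Θ : Set S.I) : Set S.I := { i | i ∈ Θ ∧ S.finType (S.component Θ i) }

/-- `Θ` is special if `Θ = Θ^∞`. -/
def special (Θ : Set S.I) : Prop := S.infpart Θ = Θ

/-- `J⊥ = { i ∈ I : a_{ij} = 0 for all j ∈ J }`. -/
def perp (J : Set S.I) : Set S.I := { i | ∀ j ∈ J, S.A i j = 0 }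

/-- The special face `R(Θ) = W_{Θ⊥} ⬝ F̄_Θ` of the Tits cone. -/
def faceR (Θ : Set S.I) : Set S.E :=
  { x | ∃ σ ∈ S.WJ (S.perp Θ), ∃ y ∈ S.closedFacet Θ, x = S.ap σ y }

lemma closedFacet_subset_chamber (J : Set S.I) : S.closedFacet J ⊆ S.chamber := by
  intro x hx i
  by_cases hi : i ∈ J
  · exact le_of_eq (hx.1 i hi).symm
  · exact hx.2 i hi

lemma chamber_subset_titsCone : S.chamber ⊆ S.titsCone :=
  fun x hx => ⟨1, one_mem _, x, hx, rfl⟩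

lemma ap_mem_titsCone {σ : S.U} (hσ : σ ∈ S.W) {x : S.E} (hx : x ∈ S.titsCone) :
    S.ap σ x ∈ S.titsCone := by
  obtain ⟨τ, hτ, y, hy, rfl⟩ := hx
  exact ⟨σ * τ, mul_mem hσ hτ, y, hy, rfl⟩

lemma faceR_subset (Θ : Set S.I) : S.faceR Θ ⊆ S.titsCone := by
  rintro x ⟨σ, hσ, y, hy, rfl⟩
  exact S.ap_mem_titsCone (S.WJ_le_W _ hσ)
    (S.chamber_subset_titsCone (S.closedFacet_subset_chamber Θ hy))

/-- The product of the word `l` in the simple reflections. -/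
def wordProd (l : List S.I) : S.U := (l.map S.sUnit).prod

/-- The length of an element of the Weyl group: the length of a shortest
expression as a product of simple reflections. -/
noncomputable def length (σ : S.U) : ℕ :=
  sInf { n | ∃ l : List S.I, l.length = n ∧ S.wordProd l = σ }

/-- `l` is a reduced expression of `σ`. -/
def IsReduced (l : List S.I) (σ : S.U) : Prop :=
  S.wordProd l = σ ∧ l.length = S.length σ

/-- `red σ`: the set of indices of simple reflections occurring in a reduced
expression of `σ` (by a result of J. Tits this set does not depend on the
choice of reduced expression). -/
def red (σ : S.U) : Set S.I := { i | ∃ l : List S.I, S.IsReduced l σ ∧ i ∈ l }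

/-- `W^J`: the minimal length representatives of the cosets `W/W_J`. -/
def minRight (J : Set S.I) : Set S.U :=
  { σ | σ ∈ S.W ∧ ∀ τ ∈ S.WJ J, S.length σ ≤ S.length (σ * τ) }

/-- `^K W`: the minimal length representatives of the cosets `W_K\W`. -/
def minLeft (K : Set S.I) : Set S.U :=
  { σ | σ ∈ S.W ∧ ∀ κ ∈ S.WJ K, S.length σ ≤ S.length (κ * σ) }

/-- `^K W^J`: the minimal length representatives of the double cosets
`W_K\W/W_J`. -/
def minDouble (K J : Set S.I) : Set S.U :=
  { σ | σ ∈ S.W ∧ ∀ κ ∈ S.WJ K, ∀ τ ∈ S.WJ J, S.length σ ≤ S.length (κ * σ * τ) }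

/-- `(W_L)^{J'}`: the minimal length representatives within `W_L` of the cosets
`W_L/W_{J'}`. -/
def minRightIn (L J' : Set S.I) : Set S.U :=
  { σ | σ ∈ S.WJ L ∧ ∀ τ ∈ S.WJ J', S.length σ ≤ S.length (σ * τ) }

/-- Pairs `(σ, R)` with `σ ∈ W` and `R ⊆ X`, the raw material for the face
monoid: `(σ, R)` represents the element `σ ε(R)`. -/
structure PreHat (S : GCMRealization) where
  w : S.W
  carrier : Set S.E
  subX : carrier ⊆ S.titsCone

lemma PreHat.ext' : ∀ {p q : S.PreHat}, p.w = q.w → p.carrier = q.carrier → p = q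
  | ⟨_, _, _⟩, ⟨_, _, _⟩, h1, h2 => by cases h1; cases h2; rfl

instance : One S.PreHat := ⟨⟨1, S.titsCone, subset_rfl⟩⟩

/-- The semidirect product multiplication `(σ, R)(τ, T) = (στ, τ⁻¹R ∩ T)`. -/
instance : Mul S.PreHat :=
  ⟨fun p q => ⟨p.w * q.w, S.ap ↑q.w ⁻¹' p.carrier ∩ q.carrier,
    fun _ hx => q.subX hx.2⟩⟩

lemma PreHat.mul_w (p q : S.PreHat) : (p * q).w = p.w * q.w := rfl

lemma PreHat.mul_carrier (p q : S.PreHat) :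
    (p * q).carrier = S.ap ↑q.w ⁻¹' p.carrier ∩ q.carrier := rfl

lemma PreHat.one_w : (1 : S.PreHat).w = 1 := rfl

lemma PreHat.one_carrier : (1 : S.PreHat).carrier = S.titsCone := rfl

instance : Monoid S.PreHat where
  mul_assoc p q r := by
    refine PreHat.ext' S (mul_assoc _ _ _) ?_
    ext x
    simp only [PreHat.mul_carrier, PreHat.mul_w, Set.mem_inter_iff, Set.mem_preimage,
      Subgroup.coe_mul, S.ap_mul]
    tauto
  one_mul p := by
    refine PreHat.ext' S (one_mul _) ?_
    ext x
    simp only [PreHat.mul_carrier, PreHat.one_carrier, Set.mem_inter_iff, Set.mem_preimage]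
    exact ⟨fun h => h.2, fun h => ⟨S.ap_mem_titsCone p.w.2 (p.subX h), h⟩⟩
  mul_one p := by
    refine PreHat.ext' S (mul_one _) ?_
    ext x
    simp only [PreHat.mul_carrier, PreHat.one_carrier, Set.mem_inter_iff, Set.mem_preimage,
      OneMemClass.coe_one, S.ap_one]
    exact ⟨fun h => h.1, fun h => ⟨h, p.subX h⟩⟩

/-- The congruence relation `σ ε(R) = σ' ε(R') ⟺ R = R'` and `σ⁻¹σ'` fixes `R`
pointwise. -/
def hatCon : Con S.PreHat where
  r p q := p.carrier = q.carrier ∧ ∀ x ∈ p.carrier, S.ap ↑p.w x = S.ap ↑q.w x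
  iseqv :=
    { refl := fun p => ⟨rfl, fun _ _ => rfl⟩
      symm := fun {p q} h => ⟨h.1.symm, fun x hx => (h.2 x (h.1 ▸ hx)).symm⟩
      trans := fun {p q r} h h' =>
        ⟨h.1.trans h'.1, fun x hx => (h.2 x hx).trans (h'.2 x (h.1 ▸ hx))⟩ }
  mul' := by
    rintro p p' q q' ⟨hc, hw⟩ ⟨hc', hw'⟩
    constructor
    · ext x
      simp only [PreHat.mul_carrier, Set.mem_inter_iff, Set.mem_preimage]
      constructor
      · rintro ⟨h1, h2⟩
        exact ⟨by rw [← hw' x h2, ← hc]; exact h1, hc' ▸ h2⟩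
      · rintro ⟨h1, h2⟩
        have h2' : x ∈ q.carrier := hc' ▸ h2
        exact ⟨by rw [hc, hw' x h2']; exact h1, h2'⟩
    · rintro x ⟨h1, h2⟩
      simp only [PreHat.mul_w, Subgroup.coe_mul, S.ap_mul]
      rw [hw _ h1, hw' x h2]

/-- The monoid in which the face monoid `Ŵ` lives: the quotient of the
semidirect product by the congruence. -/
def FM := S.hatCon.Quotient

noncomputable instance : Monoid S.FM := by unfold FM; infer_instance

/-- The class of the pair `(σ, R)` in the quotient. -/
def fmk (p : S.PreHat) : S.FM := S.hatCon.mk' p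

/-- The element `σ = σ ε(X)` of the face monoid. -/
def wEl (σ : S.W) : S.FM := S.fmk ⟨σ, S.titsCone, subset_rfl⟩

/-- The idempotent `ε(R)` for `R ⊆ X`. -/
def eps (R : Set S.E) (h : R ⊆ S.titsCone) : S.FM := S.fmk ⟨1, R, h⟩

/-- The idempotent `ε(R(Θ))`. -/
def faceEl (Θ : Set S.I) : S.FM := S.eps (S.faceR Θ) (S.faceR_subset Θ)

/-- The element `σ ε(R)` of the face monoid. -/
def genEl (σ : S.W) (R : Set S.E) (h : R ⊆ S.titsCone) : S.FM := S.fmk ⟨σ, R, h⟩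

/-- The image of the Weyl group `W` in the face monoid. -/
def Wset : Set S.FM := Set.range S.wEl

/-- The set `E = {ε(R) : R ∈ Fa(X)}` of idempotents of the face monoid. -/
def Eset : Set S.FM := { x | ∃ R, ∃ h : R ∈ S.faces, x = S.eps R (S.faces_subset h) }

/-- The face monoid `Ŵ` associated to the Weyl group `W`: the submonoid
generated by `W` and the idempotents `ε(R)`, `R` a face of the Tits cone;
its elements are exactly the `σ ε(R)` with `σ ∈ W` and `R ∈ Fa(X)`. -/
noncomputable def hatW : Submonoid S.FM := Submonoid.closure (S.Wset ∪ S.Eset)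

/-- The image of the parabolic subgroup `W_J` in the face monoid. -/
def WJset (J : Set S.I) : Set S.FM :=
  { x | ∃ σ, ∃ h : σ ∈ S.WJ J, x = S.wEl ⟨σ, S.WJ_le_W J h⟩ }

/-- The set `E_J = {ε(R) : R ∈ Fa(X), R ⊇ R(J^∞)}`. -/
def EJset (J : Set S.I) : Set S.FM :=
  { x | ∃ R, ∃ h : R ∈ S.faces, S.faceR (S.infpart J) ⊆ R ∧ x = S.eps R (S.faces_subset h) }

/-- The standard parabolic submonoid `Ŵ_J = W_J ⬝ E_J` of the face monoid. -/
def hatWJ (J : Set S.I) : Set S.FM := S.WJset J * S.EJset J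

/-- The coset `σ W_J`, an element of the Coxeter complex. -/
def coset (σ : S.U) (J : Set S.I) : Set S.U := { τ | ∃ w ∈ S.WJ J, τ = σ * w }

/-- The Coxeter complex `C = {σ W_J : σ ∈ W, J ⊆ I}`, partially ordered by
reverse inclusion. -/
def Cox : Set (Set S.U) := { c | ∃ σ ∈ S.W, ∃ J : Set S.I, c = S.coset σ J }

/-- Left translation, giving the action of `W` on the Coxeter complex. -/
def lmul (σ : S.U) (c : Set S.U) : Set S.U := (fun τ => σ * τ) '' c

/-- `W_Θ↓ = {V ∈ C : V ≤ W_Θ} = {V ∈ C : V ⊇ W_Θ}`. -/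
def downW (Θ : Set S.I) : Set (Set S.U) := { V | V ∈ S.Cox ∧ S.coset 1 Θ ⊆ V }

/-- The set of cosets `W_{Θ⊥} ⬝ (W_Θ↓)`. -/
def dSet (Θ : Set S.I) : Set (Set S.U) :=
  { c | ∃ a ∈ S.WJ (S.perp Θ), ∃ V ∈ S.downW Θ, c = S.lmul a V }

end GCMRealization

namespace GCMRealization

open scoped Pointwise

/-! The heart of the matter is Tits' lemma: if `ℓ(σᵢw) ≥ ℓ(w)` then `⟨w x, hᵢ⟩ ≥ 0` for every
`x ∈ C̄`. By induction on `ℓ(w)`: pick a left descent `σₜ` of `w` and write `w = v u` with `v` an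
alternating word in `σᵢ, σₜ` and `u` without left descents in `{i, t}`. Then
`⟨w x, hᵢ⟩ = p ⟨u x, hᵢ⟩ + q ⟨u x, hₜ⟩` where `v⁻¹hᵢ = p hᵢ + q hₜ`, and a rank-two computation
shows `p, q ≥ 0` unless `σᵢv` is shorter than `v`: for `aᵢₜaₜᵢ ≥ 4` by an invariant, otherwise
because `v` is shorter than the order of `σᵢσₜ`.

Consequently `C̄` is a strict fundamental domain: if `x, w x ∈ C̄` then `w` lies in the parabolic
subgroup generated by the `σⱼ` with `⟨x, hⱼ⟩ = 0`. Applied to a point `x` of the open facet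
`F_Θ'` with `σ' x ∈ σ R(Θ)`, this yields `Θ ⊆ Θ'` and `σ⁻¹σ' ∈ W_{Θ⊥} W_Θ'`. Conversely
`W_Θ'` commutes with `W_{Θ'⊥}`, hence fixes `R(Θ')` pointwise, and `R(Θ') ⊆ R(Θ)`. For faces of
the same type the criterion is symmetric, since `W_{Θ⊥}` and `W_Θ` commute. -/

section Rank2Arithmetic

def altWord : Bool → ℕ → List Bool
  | _, 0 => []
  | x, k + 1 => x :: altWord (!x) k

@[simp] lemma length_altWord (x : Bool) (k : ℕ) : (altWord x k).length = k := by
  induction k generalizing x <;> simp [altWord, *]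

lemma altWord_add (x : Bool) (m n : ℕ) :
    ∃ y, altWord x (m + n) = altWord x m ++ altWord y n := by
  induction m generalizing x with
  | zero => exact ⟨x, by rw [Nat.zero_add]; rfl⟩
  | succ m ih =>
    obtain ⟨y, hy⟩ := ih (!x)
    exact ⟨y, by rw [Nat.succ_add, altWord, hy]; rfl⟩

/-- The simple reflections of a rank-two realization acting on coroots: `(p, q)` stands for
`p hᵢ + q hₜ`, `true` for `σᵢ` and `false` for `σₜ`, and `a = aᵢₜ`, `b = aₜᵢ`. -/
def corootRefl (a b : ℤ) : Bool → ℤ × ℤ → ℤ × ℤ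
  | true, h => (-h.1 - b * h.2, h.2)
  | false, h => (h.1, -a * h.1 - h.2)

def corootCoeff (a b : ℤ) (l : List Bool) (h : ℤ × ℤ) : ℤ × ℤ :=
  l.foldl (fun h c => corootRefl a b c h) h

/-- The invariant keeping the coefficients nonnegative along alternating words when
`a b ≥ 4`; `c` is the next letter to be applied. -/
def IsDominantCoeff (a b : ℤ) : Bool → ℤ × ℤ → Prop
  | true, h => 0 ≤ h.1 ∧ 0 ≤ h.2 ∧ 2 * h.1 ≤ -b * h.2
  | false, h => 0 ≤ h.1 ∧ 0 ≤ h.2 ∧ 2 * h.2 ≤ -a * h.1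

lemma isDominantCoeff_corootRefl {a b : ℤ} (ha : a ≤ 0) (hb : b ≤ 0) (hab : 4 ≤ a * b)
    {c : Bool} {h : ℤ × ℤ} (hd : IsDominantCoeff a b c h) :
    IsDominantCoeff a b (!c) (corootRefl a b c h) := by
  cases c <;> obtain ⟨h1, h2, h3⟩ := hd <;> refine ⟨?_, ?_, ?_⟩ <;> dsimp only [corootRefl] <;>
    nlinarith

lemma corootCoeff_altWord_nonneg {a b : ℤ} (ha : a ≤ 0) (hb : b ≤ 0) (hab : 4 ≤ a * b)
    (c : Bool) (k : ℕ) {h : ℤ × ℤ} (hd : IsDominantCoeff a b c h) :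
    0 ≤ (corootCoeff a b (altWord c k) h).1 ∧ 0 ≤ (corootCoeff a b (altWord c k) h).2 := by
  induction k generalizing c h with
  | zero => cases c <;> exact ⟨hd.1, hd.2.1⟩
  | succ k ih => exact ih (!c) (isDominantCoeff_corootRefl ha hb hab hd)

/-- `m` is the order of `σᵢσₜ`: the braid relation of length `m` holds on `hᵢ` and `hₜ`, and
the coefficients stay nonnegative along shorter alternating words. -/
def IsBraidLength (a b : ℤ) (m : ℕ) : Prop :=
  0 < m ∧
    corootCoeff a b (altWord false m) (1, 0) = corootCoeff a b (altWord true m) (1, 0) ∧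
    corootCoeff a b (altWord false m) (0, 1) = corootCoeff a b (altWord true m) (0, 1) ∧
    ∀ k < m, 0 ≤ (corootCoeff a b (altWord false k) (1, 0)).1 ∧
      0 ≤ (corootCoeff a b (altWord false k) (1, 0)).2

instance (a b : ℤ) (m : ℕ) : Decidable (IsBraidLength a b m) := by
  unfold IsBraidLength; infer_instance

lemma exists_isBraidLength {a b : ℤ} (ha : a ≤ 0) (hb : b ≤ 0) (hab : a = 0 ↔ b = 0)
    (h4 : a * b < 4) : ∃ m, IsBraidLength a b m := by
  have ha3 : -3 ≤ a := by rcases eq_or_lt_of_le hb with rfl | hb <;> [omega; nlinarith]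
  have hb3 : -3 ≤ b := by rcases eq_or_lt_of_le ha with rfl | ha <;> [omega; nlinarith]
  interval_cases a <;> interval_cases b <;>
    first
    | omega
    | exact ⟨2, by decide⟩
    | exact ⟨3, by decide⟩
    | exact ⟨4, by decide⟩
    | exact ⟨6, by decide⟩

end Rank2Arithmetic

section

variable (S : GCMRealization)

section Words

lemma wordProd_nil : S.wordProd [] = 1 := rfl

lemma wordProd_cons (i : S.I) (l : List S.I) :
    S.wordProd (i :: l) = S.sUnit i * S.wordProd l :=
  List.prod_cons

lemma wordProd_append (l₁ l₂ : List S.I) :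
    S.wordProd (l₁ ++ l₂) = S.wordProd l₁ * S.wordProd l₂ := by
  simp [wordProd]

lemma wordProd_singleton (i : S.I) : S.wordProd [i] = S.sUnit i :=
  List.prod_singleton

lemma sUnit_mul_self (i : S.I) : S.sUnit i * S.sUnit i = 1 :=
  Units.ext (S.sMap_sq i)

lemma sUnit_inv (i : S.I) : (S.sUnit i)⁻¹ = S.sUnit i :=
  inv_eq_of_mul_eq_one_right (S.sUnit_mul_self i)

lemma sUnit_mul_sUnit_mul (i : S.I) (σ : S.U) : S.sUnit i * (S.sUnit i * σ) = σ := by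
  rw [← mul_assoc, S.sUnit_mul_self, one_mul]

lemma wordProd_reverse (l : List S.I) : S.wordProd l.reverse = (S.wordProd l)⁻¹ := by
  induction l with
  | nil => simp [wordProd]
  | cons i l ih =>
    rw [List.reverse_cons, wordProd_append, ih, wordProd_singleton, wordProd_cons, mul_inv_rev,
      sUnit_inv]

lemma sUnit_mem_W (i : S.I) : S.sUnit i ∈ S.W :=
  Subgroup.subset_closure ⟨i, rfl⟩

lemma sUnit_mem_WJ {J : Set S.I} {i : S.I} (h : i ∈ J) : S.sUnit i ∈ S.WJ J :=
  Subgroup.subset_closure ⟨i, h, rfl⟩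

lemma exists_wordProd_eq {σ : S.U} (h : σ ∈ S.W) : ∃ l, S.wordProd l = σ := by
  induction h using Subgroup.closure_induction with
  | mem _ hσ => obtain ⟨i, rfl⟩ := hσ; exact ⟨[i], S.wordProd_singleton i⟩
  | one => exact ⟨[], rfl⟩
  | mul _ _ _ _ h₁ h₂ =>
    obtain ⟨l₁, rfl⟩ := h₁
    obtain ⟨l₂, rfl⟩ := h₂
    exact ⟨l₁ ++ l₂, S.wordProd_append l₁ l₂⟩
  | inv _ _ h => obtain ⟨l, rfl⟩ := h; exact ⟨l.reverse, S.wordProd_reverse l⟩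

lemma length_le {σ : S.U} {l : List S.I} (h : S.wordProd l = σ) : S.length σ ≤ l.length :=
  Nat.sInf_le ⟨l, rfl, h⟩

lemma exists_reduced {σ : S.U} (h : σ ∈ S.W) :
    ∃ l, S.wordProd l = σ ∧ l.length = S.length σ := by
  obtain ⟨l, hl⟩ := S.exists_wordProd_eq h
  obtain ⟨l', hl'⟩ := Nat.sInf_mem (s := {n | ∃ l : List S.I, l.length = n ∧ S.wordProd l = σ})
    ⟨l.length, l, rfl, hl⟩
  exact ⟨l', hl'.2, hl'.1⟩

lemma length_inv_le {σ : S.U} (h : σ ∈ S.W) : S.length σ⁻¹ ≤ S.length σ := by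
  obtain ⟨l, hl, hlen⟩ := S.exists_reduced h
  rw [← hlen, ← List.length_reverse]
  exact S.length_le (by rw [wordProd_reverse, hl])

lemma length_inv {σ : S.U} (h : σ ∈ S.W) : S.length σ⁻¹ = S.length σ :=
  (S.length_inv_le h).antisymm (by simpa using S.length_inv_le (inv_mem h))

lemma length_wordProd_mul_le (l : List S.I) {σ : S.U} (h : σ ∈ S.W) :
    S.length (S.wordProd l * σ) ≤ l.length + S.length σ := by
  obtain ⟨l', hl', hlen⟩ := S.exists_reduced h
  rw [← hlen, ← List.length_append, ← hl', ← wordProd_append]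
  exact S.length_le rfl

lemma length_le_length_sUnit_mul_add_one (i : S.I) {σ : S.U} (h : σ ∈ S.W) :
    S.length σ ≤ S.length (S.sUnit i * σ) + 1 := by
  simpa [add_comm, wordProd_singleton, sUnit_mul_sUnit_mul] using
    S.length_wordProd_mul_le [i] (mul_mem (S.sUnit_mem_W i) h)

lemma exists_length_sUnit_mul_lt {σ : S.U} (h : σ ∈ S.W) (h1 : σ ≠ 1) :
    ∃ i, S.length (S.sUnit i * σ) < S.length σ := by
  obtain ⟨_ | ⟨i, l⟩, rfl, hlen⟩ := S.exists_reduced h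
  · exact absurd rfl h1
  · refine ⟨i, ?_⟩
    rw [← hlen, wordProd_cons, sUnit_mul_sUnit_mul]
    exact (S.length_le rfl).trans_lt (by simp)

lemma exists_length_mul_sUnit_lt {σ : S.U} (h : σ ∈ S.W) (h1 : σ ≠ 1) :
    ∃ i, S.length (σ * S.sUnit i) < S.length σ := by
  obtain ⟨i, hi⟩ := S.exists_length_sUnit_mul_lt (inv_mem h) (inv_ne_one.mpr h1)
  refine ⟨i, ?_⟩
  rwa [← sUnit_inv, ← mul_inv_rev, S.length_inv (mul_mem h (S.sUnit_mem_W i)),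
    S.length_inv h] at hi

end Words

section Rank2

variable (i t : S.I)

def word2 (l : List Bool) : List S.I := l.map (cond · i t)

lemma length_word2 (l : List Bool) : (S.word2 i t l).length = l.length :=
  List.length_map _

lemma wordProd_word2_cons (c : Bool) (l : List Bool) :
    S.wordProd (S.word2 i t (c :: l)) = S.sUnit (cond c i t) * S.wordProd (S.word2 i t l) :=
  S.wordProd_cons _ _

lemma wordProd_word2_append (l₁ l₂ : List Bool) :
    S.wordProd (S.word2 i t (l₁ ++ l₂)) =
      S.wordProd (S.word2 i t l₁) * S.wordProd (S.word2 i t l₂) := by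
  rw [word2, List.map_append, wordProd_append]
  rfl

def corootComb (h : ℤ × ℤ) : S.E →ₗ[ℝ] ℝ := (h.1 : ℝ) • S.coroot i + (h.2 : ℝ) • S.coroot t

lemma corootComb_apply (h : ℤ × ℤ) (x : S.E) :
    S.corootComb i t h x = h.1 * S.coroot i x + h.2 * S.coroot t x := rfl

lemma ap_sUnit (j : S.I) (x : S.E) : S.ap (S.sUnit j) x = x - S.coroot j x • S.root j := rfl

lemma coroot_ap_sUnit (j k : S.I) (x : S.E) :
    S.coroot j (S.ap (S.sUnit k) x) = S.coroot j x - S.A j k * S.coroot k x := by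
  rw [ap_sUnit, map_sub, map_smul, S.pairing, smul_eq_mul, mul_comm]

lemma corootComb_ap_sUnit (c : Bool) (h : ℤ × ℤ) (x : S.E) :
    S.corootComb i t h (S.ap (S.sUnit (cond c i t)) x) =
      S.corootComb i t (corootRefl (S.A i t) (S.A t i) c h) x := by
  cases c <;> simp only [corootComb_apply, cond_true, cond_false, coroot_ap_sUnit, S.diag,
    corootRefl] <;> push_cast <;> ring

lemma corootComb_ap_wordProd (l : List Bool) (h : ℤ × ℤ) (x : S.E) :
    S.corootComb i t h (S.ap (S.wordProd (S.word2 i t l)) x) =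
      S.corootComb i t (corootCoeff (S.A i t) (S.A t i) l h) x := by
  induction l generalizing h with
  | nil => rfl
  | cons c l ih =>
    rw [wordProd_word2_cons, ap_mul, corootComb_ap_sUnit, ih]
    rfl

lemma exists_ap_wordProd_eq_add (l : List Bool) (x : S.E) :
    ∃ c d : ℝ, S.ap (S.wordProd (S.word2 i t l)) x = x + c • S.root i + d • S.root t := by
  induction l with
  | nil => exact ⟨0, 0, by simp [word2, wordProd_nil, ap_one]⟩
  | cons b l ih =>
    obtain ⟨c, d, h⟩ := ih
    rw [wordProd_word2_cons, ap_mul, h, ap_sUnit]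
    cases b
    · exact ⟨c, d - S.coroot t (x + c • S.root i + d • S.root t), by rw [cond_false]; module⟩
    · exact ⟨c - S.coroot i (x + c • S.root i + d • S.root t), d, by rw [cond_true]; module⟩

/-- Both words move `x` within `x + span(αᵢ, αₜ)` and agree on `hᵢ, hₜ`; as the Cartan matrix
of `{i, t}` is invertible, they move `x` to the same point. -/
lemma wordProd_eq_of_corootCoeff_eq (h4 : S.A i t * S.A t i ≠ 4) {l l' : List Bool}
    (h₁ : corootCoeff (S.A i t) (S.A t i) l (1, 0) = corootCoeff (S.A i t) (S.A t i) l' (1, 0))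
    (h₂ : corootCoeff (S.A i t) (S.A t i) l (0, 1) = corootCoeff (S.A i t) (S.A t i) l' (0, 1)) :
    S.wordProd (S.word2 i t l) = S.wordProd (S.word2 i t l') := by
  refine Units.ext (LinearMap.ext fun x => ?_)
  change S.ap _ x = S.ap _ x
  have e₁ := S.corootComb_ap_wordProd i t l (1, 0) x
  have e₂ := S.corootComb_ap_wordProd i t l (0, 1) x
  rw [h₁, ← S.corootComb_ap_wordProd] at e₁
  rw [h₂, ← S.corootComb_ap_wordProd] at e₂
  obtain ⟨c, d, hcd⟩ := S.exists_ap_wordProd_eq_add i t l x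
  obtain ⟨c', d', hcd'⟩ := S.exists_ap_wordProd_eq_add i t l' x
  simp only [corootComb_apply, hcd, hcd', map_add, map_smul, S.pairing, S.diag, smul_eq_mul]
    at e₁ e₂
  push_cast at e₁ e₂
  have h4' : (S.A i t : ℝ) * S.A t i ≠ 4 := by exact_mod_cast h4
  have hd : d = d' := by
    by_contra hne
    exact h4' (mul_right_cancel₀ (sub_ne_zero.mpr hne)
      (by linear_combination (S.A t i : ℝ) * e₁ - 2 * e₂))
  have hc : c = c' := by subst hd; linarith
  rw [hcd, hcd', hc, hd]

lemma exists_shorter_of_braid {m k : ℕ} (hm : 0 < m) (hk : m ≤ k)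
    (hbr : S.wordProd (S.word2 i t (altWord false m)) =
      S.wordProd (S.word2 i t (altWord true m))) :
    ∃ l : List Bool, l.length < k ∧
      S.sUnit i * S.wordProd (S.word2 i t (altWord false k)) = S.wordProd (S.word2 i t l) := by
  obtain ⟨m, rfl⟩ := Nat.exists_eq_add_one.mpr hm
  obtain ⟨n, rfl⟩ := Nat.exists_eq_add_of_le hk
  obtain ⟨y, hy⟩ := altWord_add false (m + 1) n
  refine ⟨altWord false m ++ altWord y n, by simp, ?_⟩
  rw [hy, wordProd_word2_append, hbr, altWord, wordProd_word2_cons, wordProd_word2_append,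
    cond_true, mul_assoc, sUnit_mul_sUnit_mul, Bool.not_true]

lemma exists_shorter_or_corootCoeff_nonneg (hit : i ≠ t) (x : Bool) (k : ℕ) :
    (∃ l : List Bool, l.length < k ∧
      S.sUnit i * S.wordProd (S.word2 i t (altWord x k)) = S.wordProd (S.word2 i t l)) ∨
    (0 ≤ (corootCoeff (S.A i t) (S.A t i) (altWord x k) (1, 0)).1 ∧
      0 ≤ (corootCoeff (S.A i t) (S.A t i) (altWord x k) (1, 0)).2) := by
  have ha := S.offDiag_nonpos i t hit
  have hb := S.offDiag_nonpos t i hit.symm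
  cases x with
  | false =>
    by_cases h4 : 4 ≤ S.A i t * S.A t i
    · exact .inr (corootCoeff_altWord_nonneg ha hb h4 false k ⟨zero_le_one, le_rfl, by simpa⟩)
    obtain ⟨m, hm, h₁, h₂, hpos⟩ := exists_isBraidLength ha hb (S.zero_iff i t) (by omega)
    by_cases hk : k < m
    · exact .inr (hpos k hk)
    · exact .inl (S.exists_shorter_of_braid i t hm (by omega)
        (S.wordProd_eq_of_corootCoeff_eq i t (by omega) h₁ h₂))
  | true =>
    cases k with
    | zero => exact .inr ⟨zero_le_one, le_rfl⟩
    | succ k =>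
      refine .inl ⟨altWord false k, by simp, ?_⟩
      rw [altWord, wordProd_word2_cons, cond_true, sUnit_mul_sUnit_mul, Bool.not_true]

end Rank2

section Chamber

/-- Stripping left descents in `{i, t}` one at a time; two consecutive ones differ, so the
stripped word alternates. -/
lemma exists_eq_wordProd_altWord_mul (i t : S.I) {w : S.U} (hw : w ∈ S.W) :
    ∃ x k u, u ∈ S.W ∧ w = S.wordProd (S.word2 i t (altWord x k)) * u ∧
      S.length w = k + S.length u ∧
      S.length u ≤ S.length (S.sUnit i * u) ∧ S.length u ≤ S.length (S.sUnit t * u) := by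
  obtain ⟨n, hn⟩ : ∃ n, S.length w = n := ⟨_, rfl⟩
  induction n using Nat.strong_induction_on generalizing w with
  | _ n ih =>
  by_cases hdesc : ∃ c : Bool, S.length (S.sUnit (cond c i t) * w) < S.length w
  swap
  · simp only [not_exists, not_lt] at hdesc
    exact ⟨true, 0, w, hw, (one_mul w).symm, by simp, hdesc true, hdesc false⟩
  obtain ⟨c, hc⟩ := hdesc
  obtain ⟨y, k, u, hu, hw₁, hlen, hi, ht⟩ :=
    ih _ (hn ▸ hc) (mul_mem (S.sUnit_mem_W _) hw) rfl
  have hw_eq : w = S.sUnit (cond c i t) * (S.wordProd (S.word2 i t (altWord y k)) * u) := by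
    rw [← hw₁, sUnit_mul_sUnit_mul]
  have hy : altWord y k = altWord (!c) k := by
    rcases k with _ | k
    · rfl
    obtain rfl | rfl : y = !c ∨ y = c := by cases y <;> cases c <;> simp
    · rfl
    have : S.length w ≤ k + S.length u := by
      rw [hw_eq, altWord, wordProd_word2_cons, mul_assoc, sUnit_mul_sUnit_mul]
      simpa [length_word2] using S.length_wordProd_mul_le (S.word2 i t (altWord (!y) k)) hu
    omega
  refine ⟨c, k + 1, u, hu, by rw [hw_eq, hy, ← mul_assoc]; rfl, ?_, hi, ht⟩
  have := S.length_le_length_sUnit_mul_add_one (cond c i t) hw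
  omega

theorem coroot_ap_nonneg_of_length_le {w : S.U} (hw : w ∈ S.W) {i : S.I}
    (hi : S.length w ≤ S.length (S.sUnit i * w)) {x : S.E} (hx : x ∈ S.chamber) :
    0 ≤ S.coroot i (S.ap w x) := by
  obtain ⟨n, hn⟩ : ∃ n, S.length w = n := ⟨_, rfl⟩
  induction n using Nat.strong_induction_on generalizing w i with
  | _ n ih =>
  rcases eq_or_ne w 1 with rfl | hw1
  · exact hx i
  obtain ⟨t, ht⟩ := S.exists_length_sUnit_mul_lt hw hw1
  have hit : i ≠ t := by rintro rfl; omega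
  obtain ⟨y, k, u, hu, rfl, hlen, hui, hut⟩ := S.exists_eq_wordProd_altWord_mul i t hw
  have hk : k ≠ 0 := by
    rintro rfl
    simp only [altWord, word2, List.map_nil, wordProd_nil, one_mul] at ht hut
    omega
  rcases S.exists_shorter_or_corootCoeff_nonneg i t hit y k with ⟨l, hl, hsl⟩ | ⟨hp, hq⟩
  · have := S.length_wordProd_mul_le (S.word2 i t l) hu
    rw [← hsl, mul_assoc, length_word2] at this
    omega
  · have hui' := ih _ (by omega) hu hui rfl
    have hut' := ih _ (by omega) hu hut rfl
    have e := S.corootComb_ap_wordProd i t (altWord y k) (1, 0) (S.ap u x)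
    simp only [corootComb_apply, Int.cast_one, Int.cast_zero, one_mul, zero_mul, add_zero] at e
    rw [ap_mul, e]
    exact add_nonneg (mul_nonneg (by exact_mod_cast hp) hui')
      (mul_nonneg (by exact_mod_cast hq) hut')

lemma coroot_eq_zero_of_length_mul_sUnit_lt {w : S.U} (hw : w ∈ S.W) {i : S.I}
    (hi : S.length (w * S.sUnit i) < S.length w) {x : S.E} (hx : x ∈ S.chamber)
    (hwx : S.ap w x ∈ S.chamber) : S.coroot i x = 0 := by
  have hv : S.length (S.sUnit i * w⁻¹) ≤ S.length (S.sUnit i * (S.sUnit i * w⁻¹)) := by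
    rw [sUnit_mul_sUnit_mul, S.length_inv hw, ← sUnit_inv, ← mul_inv_rev,
      S.length_inv (mul_mem hw (S.sUnit_mem_W i))]
    exact hi.le
  have h := S.coroot_ap_nonneg_of_length_le (mul_mem (S.sUnit_mem_W i) (inv_mem hw)) hv hwx
  rw [← ap_mul, mul_assoc, inv_mul_cancel, mul_one, coroot_ap_sUnit, S.diag] at h
  push_cast at h
  linarith [hx i]

theorem mem_WJ_of_ap_mem_chamber {w : S.U} (hw : w ∈ S.W) {x : S.E} (hx : x ∈ S.chamber)
    (hwx : S.ap w x ∈ S.chamber) : w ∈ S.WJ {j | S.coroot j x = 0} := by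
  obtain ⟨n, hn⟩ : ∃ n, S.length w = n := ⟨_, rfl⟩
  induction n using Nat.strong_induction_on generalizing w with
  | _ n ih =>
  rcases eq_or_ne w 1 with rfl | hw1
  · exact one_mem _
  obtain ⟨i, hi⟩ := S.exists_length_mul_sUnit_lt hw hw1
  have hxi : S.coroot i x = 0 := S.coroot_eq_zero_of_length_mul_sUnit_lt hw hi hx hwx
  have hsx : S.ap (S.sUnit i) x = x := by rw [ap_sUnit, hxi, zero_smul, sub_zero]
  have hmem := ih _ (hn ▸ hi) (mul_mem hw (S.sUnit_mem_W i)) (by rwa [ap_mul, hsx]) rfl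
  simpa [mul_assoc, S.sUnit_mul_self] using mul_mem hmem (S.sUnit_mem_WJ hxi)

end Chamber

section Faces

lemma ap_eq_self_of_mem_WJ {J : Set S.I} {x : S.E} (hx : ∀ j ∈ J, S.coroot j x = 0) {w : S.U}
    (hw : w ∈ S.WJ J) : S.ap w x = x := by
  have : S.WJ J ≤ MulAction.stabilizer S.U x := by
    rw [WJ, Subgroup.closure_le]
    rintro _ ⟨j, hj, rfl⟩
    exact (show S.ap (S.sUnit j) x = x by rw [ap_sUnit, hx j hj, zero_smul, sub_zero])
  exact this hw

lemma sUnit_commute {i j : S.I} (h : S.A i j = 0) : Commute (S.sUnit i) (S.sUnit j) := by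
  refine Units.ext (LinearMap.ext fun x => ?_)
  change S.ap (S.sUnit i) (S.ap (S.sUnit j) x) = S.ap (S.sUnit j) (S.ap (S.sUnit i) x)
  simp only [ap_sUnit, map_sub, map_smul, S.pairing, h, (S.zero_iff i j).mp h, Int.cast_zero,
    smul_eq_mul, mul_zero, sub_zero]
  abel

lemma WJ_perp_le_centralizer (J : Set S.I) :
    S.WJ (S.perp J) ≤ Subgroup.centralizer (S.WJ J : Set S.U) := by
  rw [WJ, WJ, Subgroup.centralizer_closure, Subgroup.closure_le]
  rintro _ ⟨j, hj, rfl⟩ _ ⟨k, hk, rfl⟩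
  exact (S.sUnit_commute (hj k hk)).symm

lemma WJ_mono {J K : Set S.I} (h : J ⊆ K) : S.WJ J ≤ S.WJ K :=
  Subgroup.closure_mono (Set.image_mono h)

lemma perp_anti {J K : Set S.I} (h : J ⊆ K) : S.perp K ⊆ S.perp J :=
  fun _ hi j hj => hi j (h hj)

lemma closedFacet_anti {J K : Set S.I} (h : J ⊆ K) : S.closedFacet K ⊆ S.closedFacet J :=
  fun _ hx => ⟨fun j hj => hx.1 j (h hj), fun j _ => S.closedFacet_subset_chamber K hx j⟩

lemma image_faceR_subset_of_mem_mul {Θ Θ' : Set S.I} (hΘ : Θ ⊆ Θ') {τ : S.U}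
    (hτ : τ ∈ (S.WJ (S.perp Θ) : Set S.U) * (S.WJ Θ' : Set S.U)) :
    S.ap τ '' S.faceR Θ' ⊆ S.faceR Θ := by
  obtain ⟨α, hα, β, hβ, rfl⟩ := hτ
  rintro _ ⟨_, ⟨γ, hγ, y, hy, rfl⟩, rfl⟩
  have hβγ : β * γ = γ * β := S.WJ_perp_le_centralizer Θ' hγ β hβ
  refine ⟨α * γ, mul_mem hα (S.WJ_mono (S.perp_anti hΘ) hγ), y, S.closedFacet_anti hΘ hy, ?_⟩
  change S.ap (α * (β * γ)) y = S.ap (α * γ) y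
  rw [hβγ, ← mul_assoc, ap_mul, S.ap_eq_self_of_mem_WJ hy.1 hβ]

lemma image_faceR_subset_image_of_mem_mul {Θ Θ' : Set S.I} (hΘ : Θ ⊆ Θ') {σ σ' : S.U}
    (h : σ⁻¹ * σ' ∈ (S.WJ (S.perp Θ) : Set S.U) * (S.WJ Θ' : Set S.U)) :
    S.ap σ' '' S.faceR Θ' ⊆ S.ap σ '' S.faceR Θ := by
  have : S.ap σ' = S.ap σ ∘ S.ap (σ⁻¹ * σ') := by
    funext x
    rw [Function.comp_apply, ← ap_mul, mul_inv_cancel_left]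
  rw [this, Set.image_comp]
  exact Set.image_mono (S.image_faceR_subset_of_mem_mul hΘ h)

lemma inv_mem_WJ_perp_mul_WJ {Θ : Set S.I} {τ : S.U}
    (h : τ ∈ (S.WJ (S.perp Θ) : Set S.U) * (S.WJ Θ : Set S.U)) :
    τ⁻¹ ∈ (S.WJ (S.perp Θ) : Set S.U) * (S.WJ Θ : Set S.U) := by
  obtain ⟨α, hα, β, hβ, rfl⟩ := h
  refine ⟨α⁻¹, inv_mem hα, β⁻¹, inv_mem hβ, ?_⟩
  rw [mul_inv_rev]
  exact (S.WJ_perp_le_centralizer Θ (inv_mem hα) β⁻¹ (inv_mem hβ)).symm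

lemma exists_coroot_eq (f : S.I → ℝ) : ∃ x : S.E, ∀ i, S.coroot i x = f i := by
  have hli : LinearIndependent ℝ (fun i => ⇑(S.coroot i)) :=
    S.coroot_indep.map' (LinearMap.ltoFun ℝ S.E ℝ ℝ)
      (LinearMap.ker_eq_bot.mpr DFunLike.coe_injective)
  have hle : Submodule.span ℝ (Set.range (flip fun i => ⇑(S.coroot i))) ≤
      LinearMap.range (LinearMap.pi S.coroot) :=
    Submodule.span_le.mpr (by rintro _ ⟨x, rfl⟩; exact ⟨x, rfl⟩)
  rw [span_flip_eq_top_iff_linearIndependent.mpr hli] at hle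
  obtain ⟨x, hx⟩ := hle (Submodule.mem_top (x := f))
  exact ⟨x, congrFun hx⟩

theorem subset_and_mem_mul_of_image_faceR_subset {Θ Θ' : Set S.I} {σ σ' : S.U}
    (hσ : σ ∈ S.W) (hσ' : σ' ∈ S.W) (h : S.ap σ' '' S.faceR Θ' ⊆ S.ap σ '' S.faceR Θ) :
    Θ ⊆ Θ' ∧ σ⁻¹ * σ' ∈ (S.WJ (S.perp Θ) : Set S.U) * (S.WJ Θ' : Set S.U) := by
  classical
  obtain ⟨x, hx⟩ := S.exists_coroot_eq (fun j => if j ∈ Θ' then 0 else 1)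
  have hzero : {j | S.coroot j x = 0} = Θ' := by
    ext j
    by_cases hj : j ∈ Θ' <;> simp [hx, hj]
  have hxF : x ∈ S.closedFacet Θ' :=
    ⟨fun j hj => by simp [hx, hj], fun j hj => by simp [hx, hj]⟩
  obtain ⟨_, ⟨α, hα, y, hy, rfl⟩, hσy⟩ := h ⟨x, ⟨1, one_mem _, x, hxF, rfl⟩, rfl⟩
  have hwx : S.ap (α⁻¹ * (σ⁻¹ * σ')) x = y := by
    change S.ap α⁻¹ (S.ap σ⁻¹ (S.ap σ' x)) = y
    rw [← hσy, ← S.ap_mul σ⁻¹, inv_mul_cancel, ap_one, ← ap_mul, inv_mul_cancel, ap_one]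
  have hw : α⁻¹ * (σ⁻¹ * σ') ∈ S.W :=
    mul_mem (inv_mem (S.WJ_le_W _ hα)) (mul_mem (inv_mem hσ) hσ')
  have hwΘ' : α⁻¹ * (σ⁻¹ * σ') ∈ S.WJ Θ' := hzero ▸
    S.mem_WJ_of_ap_mem_chamber hw (S.closedFacet_subset_chamber _ hxF)
      (hwx ▸ S.closedFacet_subset_chamber _ hy)
  have hyx : y = x := hwx ▸ S.ap_eq_self_of_mem_WJ hxF.1 hwΘ'
  exact ⟨fun j hj => hzero.subset (hyx ▸ hy.1 j hj), α, hα, _, hwΘ', mul_inv_cancel_left α _⟩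

end Faces

end

theorem face_inclusion_criterion_general (S : GCMRealization) (Θ Θ' : Set S.I) (σ σ' : S.U)
    (hσ : σ ∈ S.W) (hσ' : σ' ∈ S.W) :
    (S.ap σ' '' S.faceR Θ' ⊆ S.ap σ '' S.faceR Θ ↔
      Θ ⊆ Θ' ∧ σ⁻¹ * σ' ∈ (S.WJ (S.perp Θ) : Set S.U) * (S.WJ Θ' : Set S.U)) ∧
    (Θ' = Θ → S.ap σ' '' S.faceR Θ' ≠ S.ap σ '' S.faceR Θ →
      ¬ S.ap σ' '' S.faceR Θ' ⊆ S.ap σ '' S.faceR Θ) := by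
  refine ⟨⟨S.subset_and_mem_mul_of_image_faceR_subset hσ hσ',
    fun h => S.image_faceR_subset_image_of_mem_mul h.1 h.2⟩, ?_⟩
  rintro rfl hne hsub
  have hrev := S.inv_mem_WJ_perp_mul_WJ (S.subset_and_mem_mul_of_image_faceR_subset hσ hσ' hsub).2
  rw [mul_inv_rev, inv_inv] at hrev
  exact hne (hsub.antisymm (S.image_faceR_subset_image_of_mem_mul subset_rfl hrev))

/-- For `σ, σ' ∈ W` and special `Θ, Θ' ⊆ I`:
`σ'R(Θ') ⊆ σR(Θ)` iff `Θ' ⊇ Θ` and `σ⁻¹σ' ∈ W_{Θ⊥} W_{Θ'}`.  Consequently,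
distinct faces of the Tits cone of the same type are incomparable under
inclusion. -/
theorem face_inclusion_criterion (S : GCMRealization) (Θ Θ' : Set S.I)
    (hΘ : S.special Θ) (hΘ' : S.special Θ') (σ σ' : S.U)
    (hσ : σ ∈ S.W) (hσ' : σ' ∈ S.W) :
    (S.ap σ' '' S.faceR Θ' ⊆ S.ap σ '' S.faceR Θ ↔
      Θ ⊆ Θ' ∧ σ⁻¹ * σ' ∈ (S.WJ (S.perp Θ) : Set S.U) * (S.WJ Θ' : Set S.U)) ∧
    (Θ' = Θ → S.ap σ' '' S.faceR Θ' ≠ S.ap σ '' S.faceR Θ →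
      ¬ S.ap σ' '' S.faceR Θ' ⊆ S.ap σ '' S.faceR Θ) :=
  face_inclusion_criterion_general S Θ Θ' σ σ' hσ hσ'

end GCMRealization
end

section
/- The face monoid Ŵ is an inverse monoid, i.e. for every x ∈ Ŵ there is a unique y ∈ Ŵ with xyx = x and yxy = y, and the inverse of σε(R) (σ ∈ W, R a face of X) is ε(R)σ⁻¹. -/
open scoped Pointwise

/-! Every element of the quotient is some `σ ε(R)`, and `ε(R) σ⁻¹ = σ⁻¹ ε(σR)` is an inverse of
it; it lies in `Ŵ` whenever `σ ε(R)` does, because then so does `ε(R) = σ⁻¹ ⬝ σ ε(R)`.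
Uniqueness is the classical fact that inverses are unique once idempotents commute: an
idempotent `σ ε(R)` has `σ² = σ` on `R`, so `σ` fixes `R` and the element is `ε(R)`, and
`ε(R) ε(T) = ε(R ∩ T)`. -/

theorem inverse_unique_of_commute_idempotents {M : Type*} [Semigroup M]
    (hcomm : ∀ e f : M, IsIdempotentElem e → IsIdempotentElem f → Commute e f)
    {x y z : M} (hxy : x * y * x = x) (hyx : y * x * y = y)
    (hxz : x * z * x = x) (hzx : z * x * z = z) : y = z := by
  have idem : ∀ {a b : M}, a * b * a = a → IsIdempotentElem (a * b) ∧ IsIdempotentElem (b * a) :=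
    fun {a b} h => ⟨by rw [IsIdempotentElem, ← mul_assoc, h],
      by rw [IsIdempotentElem, mul_assoc, ← mul_assoc a, h]⟩
  have hy : y = z * x * y := calc
    y = y * (x * z * x) * y := by rw [hxz, hyx]
    _ = (y * x) * (z * x) * y := by simp only [mul_assoc]
    _ = (z * x) * (y * x) * y := by rw [(hcomm _ _ (idem hxy).2 (idem hxz).2).eq]
    _ = z * x * (y * x * y) := by simp only [mul_assoc]
    _ = z * x * y := by rw [hyx]
  have hz : z = z * x * y := calc
    z = z * (x * y * x) * z := by rw [hxy, hzx]
    _ = z * ((x * y) * (x * z)) := by simp only [mul_assoc]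
    _ = z * ((x * z) * (x * y)) := by rw [(hcomm _ _ (idem hxy).1 (idem hxz).1).eq]
    _ = (z * x * z) * x * y := by simp only [mul_assoc]
    _ = z * x * y := by rw [hzx]
  rw [hy, ← hz]

namespace GCMRealization

variable (S : GCMRealization)

lemma ap_inv_ap (σ : S.U) (x : S.E) : S.ap σ⁻¹ (S.ap σ x) = x := by
  rw [← S.ap_mul, inv_mul_cancel, S.ap_one]

lemma ap_ap_inv (σ : S.U) (x : S.E) : S.ap σ (S.ap σ⁻¹ x) = x := by
  rw [← S.ap_mul, mul_inv_cancel, S.ap_one]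

lemma ap_injective (σ : S.U) : Function.Injective (S.ap σ) :=
  Function.LeftInverse.injective (S.ap_inv_ap σ)

lemma image_ap_eq_preimage_inv (σ : S.U) (R : Set S.E) : S.ap σ '' R = S.ap σ⁻¹ ⁻¹' R :=
  congrFun (Set.image_eq_preimage_of_inverse (S.ap_inv_ap σ) (S.ap_ap_inv σ)) R

lemma image_ap_subset_titsCone (σ : S.W) {R : Set S.E} (h : R ⊆ S.titsCone) :
    S.ap σ '' R ⊆ S.titsCone := by
  rintro _ ⟨x, hx, rfl⟩
  exact S.ap_mem_titsCone σ.2 (h hx)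

lemma exists_eq_genEl (x : S.FM) : ∃ σ R, ∃ h : R ⊆ S.titsCone, x = S.genEl σ R h := by
  obtain ⟨⟨σ, R, h⟩, rfl⟩ := S.hatCon.mk'_surjective x
  exact ⟨σ, R, h, rfl⟩

lemma genEl_congr {σ τ : S.W} {R T : Set S.E} (hσ : σ = τ) (hR : R = T) (h : R ⊆ S.titsCone)
    (h' : T ⊆ S.titsCone) : S.genEl σ R h = S.genEl τ T h' := by
  subst hσ hR
  rfl

lemma genEl_mul_genEl (σ τ : S.W) {R T : Set S.E} (hR : R ⊆ S.titsCone)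
    (hT : T ⊆ S.titsCone) :
    S.genEl σ R hR * S.genEl τ T hT =
      S.genEl (σ * τ) (S.ap τ ⁻¹' R ∩ T) (fun _ hx => hT hx.2) :=
  (map_mul S.hatCon.mk' _ _).symm

lemma eps_mul_genEl (σ : S.W) {R T : Set S.E} (hR : R ⊆ S.titsCone)
    (hT : T ⊆ S.titsCone) :
    S.eps T hT * S.genEl σ R hR = S.genEl σ (S.ap σ ⁻¹' T ∩ R) (fun _ hx => hR hx.2) :=
  (S.genEl_mul_genEl 1 σ hT hR).trans (S.genEl_congr (one_mul σ) rfl _ _)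

lemma eps_mul_eps {R T : Set S.E} (hR : R ⊆ S.titsCone) (hT : T ⊆ S.titsCone) :
    S.eps R hR * S.eps T hT = S.eps (R ∩ T) (fun _ hx => hT hx.2) :=
  S.eps_mul_genEl 1 hT hR

lemma eps_mul_wEl_inv (σ : S.W) {R : Set S.E} (h : R ⊆ S.titsCone) :
    S.eps R h * S.wEl σ⁻¹ = S.genEl σ⁻¹ (S.ap σ '' R) (S.image_ap_subset_titsCone σ h) := by
  refine (S.genEl_mul_genEl 1 σ⁻¹ h subset_rfl).trans (S.genEl_congr (one_mul _) ?_ _ _)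
  rw [InvMemClass.coe_inv, ← S.image_ap_eq_preimage_inv, Set.inter_eq_left]
  exact S.image_ap_subset_titsCone σ h

lemma wEl_inv_mul_genEl (σ : S.W) {R : Set S.E} (h : R ⊆ S.titsCone) :
    S.wEl σ⁻¹ * S.genEl σ R h = S.eps R h :=
  (S.genEl_mul_genEl σ⁻¹ σ subset_rfl h).trans
    (S.genEl_congr (inv_mul_cancel σ) (Set.inter_eq_right.mpr fun _ hx =>
      S.ap_mem_titsCone σ.2 (h hx)) _ _)

lemma genEl_mul_genEl_inv (σ : S.W) {R : Set S.E} (h : R ⊆ S.titsCone) :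
    S.genEl σ R h * S.genEl σ⁻¹ (S.ap σ '' R) (S.image_ap_subset_titsCone σ h) =
      S.eps (S.ap σ '' R) (S.image_ap_subset_titsCone σ h) := by
  refine (S.genEl_mul_genEl _ _ _ _).trans (S.genEl_congr (mul_inv_cancel σ) ?_ _ _)
  rw [InvMemClass.coe_inv, ← S.image_ap_eq_preimage_inv, Set.inter_self]

lemma genEl_inv_mul_genEl (σ : S.W) {R : Set S.E} (h : R ⊆ S.titsCone) :
    S.genEl σ⁻¹ (S.ap σ '' R) (S.image_ap_subset_titsCone σ h) * S.genEl σ R h =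
      S.eps R h := by
  refine (S.genEl_mul_genEl _ _ _ _).trans (S.genEl_congr (inv_mul_cancel σ) ?_ _ _)
  rw [Set.preimage_image_eq R (S.ap_injective σ), Set.inter_self]

lemma eps_mul_wEl_inv_inverse_genEl (σ : S.W) {R : Set S.E} (h : R ⊆ S.titsCone) :
    S.genEl σ R h * (S.eps R h * S.wEl σ⁻¹) * S.genEl σ R h = S.genEl σ R h ∧
      S.eps R h * S.wEl σ⁻¹ * S.genEl σ R h * (S.eps R h * S.wEl σ⁻¹) =
        S.eps R h * S.wEl σ⁻¹ := by
  rw [S.eps_mul_wEl_inv]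
  constructor
  · rw [S.genEl_mul_genEl_inv, S.eps_mul_genEl]
    refine S.genEl_congr rfl ?_ _ _
    rw [Set.preimage_image_eq R (S.ap_injective σ), Set.inter_self]
  · rw [S.genEl_inv_mul_genEl, S.eps_mul_genEl]
    refine S.genEl_congr rfl ?_ _ _
    rw [InvMemClass.coe_inv, ← S.image_ap_eq_preimage_inv, Set.inter_self]

lemma eq_eps_of_isIdempotentElem {σ : S.W} {R : Set S.E} (h : R ⊆ S.titsCone)
    (he : IsIdempotentElem (S.genEl σ R h)) : S.genEl σ R h = S.eps R h := by
  rw [IsIdempotentElem, genEl_mul_genEl] at he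
  obtain ⟨hR, hfix⟩ := (Con.eq _).mp he
  refine (Con.eq _).mpr ⟨rfl, fun x hx => S.ap_injective σ ?_⟩
  exact hfix x (hR ▸ hx)

lemma commute_of_isIdempotentElem {e f : S.FM} (he : IsIdempotentElem e)
    (hf : IsIdempotentElem f) : Commute e f := by
  obtain ⟨σ, R, hR, rfl⟩ := S.exists_eq_genEl e
  obtain ⟨τ, T, hT, rfl⟩ := S.exists_eq_genEl f
  rw [Commute, SemiconjBy, S.eq_eps_of_isIdempotentElem hR he,
    S.eq_eps_of_isIdempotentElem hT hf, S.eps_mul_eps, S.eps_mul_eps]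
  exact S.genEl_congr rfl (Set.inter_comm _ _) _ _

lemma wEl_mem_hatW (σ : S.W) : S.wEl σ ∈ S.hatW :=
  Submonoid.subset_closure (Or.inl ⟨σ, rfl⟩)

/-- The face monoid `Ŵ` is an inverse monoid: every `x ∈ Ŵ`
has a unique `y ∈ Ŵ` with `xyx = x` and `yxy = y`; moreover the inverse of
`σε(R)` is `ε(R)σ⁻¹`. -/
theorem hatW_inverse_monoid (S : GCMRealization) :
    (∀ x ∈ S.hatW, ∃! y, y ∈ S.hatW ∧ x * y * x = x ∧ y * x * y = y) ∧
    (∀ (σ : S.W) (R : Set S.E) (h : R ∈ S.faces),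
      S.genEl σ R (S.faces_subset h) * (S.eps R (S.faces_subset h) * S.wEl σ⁻¹) *
          S.genEl σ R (S.faces_subset h) = S.genEl σ R (S.faces_subset h) ∧
      (S.eps R (S.faces_subset h) * S.wEl σ⁻¹) * S.genEl σ R (S.faces_subset h) *
          (S.eps R (S.faces_subset h) * S.wEl σ⁻¹) =
        S.eps R (S.faces_subset h) * S.wEl σ⁻¹) := by
  refine ⟨fun x hx => ?_, fun σ R h => S.eps_mul_wEl_inv_inverse_genEl σ _⟩
  obtain ⟨σ, R, h, rfl⟩ := S.exists_eq_genEl x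
  have hε : S.eps R h ∈ S.hatW := S.wEl_inv_mul_genEl σ h ▸ mul_mem (S.wEl_mem_hatW σ⁻¹) hx
  obtain ⟨hxy, hyx⟩ := S.eps_mul_wEl_inv_inverse_genEl σ h
  refine ⟨S.eps R h * S.wEl σ⁻¹, ⟨mul_mem hε (S.wEl_mem_hatW _), hxy, hyx⟩, ?_⟩
  rintro y ⟨-, hxy', hyx'⟩
  exact inverse_unique_of_commute_idempotents (fun _ _ => S.commute_of_isIdempotentElem)
    hxy' hyx' hxy hyx

end GCMRealization
end
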